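/- Let α > 1 and for β > 0 let ρ(β) be the unique positive real with β·Ψ(ρ(β)·β^α) = 1. Then ρ(β)/β converges, as β → +∞, to (∫₀^∞ exp(−u^{α+1}/(α+1)) du)^{α+1}; equivalently (ρ(β)/β)^{1/(α+1)} → ∫₀^∞ exp(−u^{α+1}/(α+1)) du. In particular, ρ(β) → +∞ as β → +∞, and the function β ↦ ρ(β) attains a minimum: there exists β_c > 0 with ρ_c := ρ(β_c) = inf_{β>0} ρ(β) > 0. -/

import Mathlib

/-!
Because `-log (1 - u) - α u ≤ g u ≤ -log (1 - u)`, the integrand of `Ψ x` is squeezed between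
`(1 - u) ^ (x - 1)` and `e ^ (α x) (1 - u) ^ (x - 1)`; in particular `Ψ x ≥ 1 / x`, so
`x(β) = ρ(β) β ^ α ≥ β` tends to infinity. Laplace's method: substituting `u = t / c` in
`Ψ (c ^ (α + 1))`, the bounds `u ^ (α + 1) / (α + 1) ≤ g u ≤ u ^ (α + 1) / ((α + 1) (1 - u))` and
dominated convergence give `c Ψ (c ^ (α + 1)) → ∫₀^∞ exp (-t ^ (α + 1) / (α + 1)) dt`.
Since `(ρ / β) ^ (1 / (α + 1)) = x ^ (1 / (α + 1)) Ψ x` for `x = x(β)`, the limits follow.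
Finally `ρ β ≥ β ^ (1 - α)` blows up as `β → 0⁺`, so the continuous `ρ` tends to `+∞` at both
ends of `(0, ∞)` and attains its minimum.
-/

open MeasureTheory Real Filter Set

noncomputable def gfun (α : ℝ) (u : ℝ) : ℝ := ∫ v in (0:ℝ)..u, v ^ α / (1 - v)

noncomputable def Psi (α : ℝ) (x : ℝ) : ℝ :=
  ∫ u in (0:ℝ)..1, (1 - u)⁻¹ * Real.exp (-x * gfun α u)

open Topology

section gfun

variable {α u : ℝ}

lemma continuousOn_rpow_div_one_sub (hα : 0 ≤ α) :
    ContinuousOn (fun v : ℝ => v ^ α / (1 - v)) (Iio 1) := fun v hv =>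
  ((continuousAt_rpow_const v α (Or.inr hα)).div (by fun_prop)
    (sub_pos.2 hv).ne').continuousWithinAt

lemma intervalIntegrable_rpow_div_one_sub (hα : 0 ≤ α) (hu : u < 1) :
    IntervalIntegrable (fun v : ℝ => v ^ α / (1 - v)) volume 0 u :=
  ((continuousOn_rpow_div_one_sub hα).mono fun _ hv =>
    hv.2.trans_lt (max_lt zero_lt_one hu)).intervalIntegrable

lemma hasDerivAt_gfun (hα : 0 ≤ α) (hu : u < 1) :
    HasDerivAt (gfun α) (u ^ α / (1 - u)) u :=
  intervalIntegral.integral_hasDerivAt_right (intervalIntegrable_rpow_div_one_sub hα hu)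
    ((continuousOn_rpow_div_one_sub hα).stronglyMeasurableAtFilter isOpen_Iio u hu)
    ((continuousOn_rpow_div_one_sub hα).continuousAt (Iio_mem_nhds hu))

lemma continuousOn_gfun (hα : 0 ≤ α) : ContinuousOn (gfun α) (Iio 1) := fun _ hu =>
  (hasDerivAt_gfun hα hu).continuousAt.continuousWithinAt

lemma integral_inv_one_sub (hu : u < 1) :
    ∫ v in (0:ℝ)..u, (1 - v)⁻¹ = -log (1 - u) := by
  rw [intervalIntegral.integral_comp_sub_left (fun v => v⁻¹),
    integral_inv (notMem_uIcc_of_lt (by linarith) (by norm_num)), sub_zero,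
    one_div, log_inv]

lemma intervalIntegrable_inv_one_sub (hu : u < 1) :
    IntervalIntegrable (fun v : ℝ => (1 - v)⁻¹) volume 0 u :=
  (ContinuousOn.inv₀ (by fun_prop) fun v hv =>
    (sub_pos.2 (hv.2.trans_lt (max_lt zero_lt_one hu))).ne').intervalIntegrable

lemma rpow_add_one_div_le_gfun (hα : 0 ≤ α) (hu₀ : 0 ≤ u) (hu : u < 1) :
    u ^ (α + 1) / (α + 1) ≤ gfun α u := by
  have h := intervalIntegral.integral_mono_on hu₀
    (intervalIntegral.intervalIntegrable_rpow' (by linarith))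
    (intervalIntegrable_rpow_div_one_sub hα hu) fun v hv =>
      le_div_self (rpow_nonneg hv.1 α) (by linarith [hv.2]) (by linarith [hv.1])
  rwa [integral_rpow (Or.inl (by linarith)), zero_rpow (by linarith), sub_zero] at h

lemma gfun_le_rpow_add_one_div (hα : 0 ≤ α) (hu₀ : 0 ≤ u) (hu : u < 1) :
    gfun α u ≤ u ^ (α + 1) / (α + 1) / (1 - u) := by
  have h := intervalIntegral.integral_mono_on hu₀
    (intervalIntegrable_rpow_div_one_sub hα hu)
    ((intervalIntegral.intervalIntegrable_rpow' (by linarith)).div_const (1 - u)) fun v hv =>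
      div_le_div_of_nonneg_left (rpow_nonneg hv.1 α) (by linarith) (by linarith [hv.2])
  rwa [intervalIntegral.integral_div, integral_rpow (Or.inl (by linarith)),
    zero_rpow (by linarith), sub_zero] at h

lemma gfun_le_neg_log (hα : 0 ≤ α) (hu₀ : 0 ≤ u) (hu : u < 1) :
    gfun α u ≤ -log (1 - u) := by
  rw [← integral_inv_one_sub hu]
  refine intervalIntegral.integral_mono_on hu₀ (intervalIntegrable_rpow_div_one_sub hα hu)
    (intervalIntegrable_inv_one_sub hu) fun v hv => ?_
  rw [← one_div]
  exact div_le_div_of_nonneg_right (rpow_le_one hv.1 (by linarith [hv.2]) hα)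
    (by linarith [hv.2])

/-- Bernoulli's inequality `v ^ α ≥ 1 - α (1 - v)` bounds the integrand from below. -/
lemma neg_log_sub_le_gfun (hα : 1 ≤ α) (hu₀ : 0 ≤ u) (hu : u < 1) :
    -log (1 - u) - α * u ≤ gfun α u := by
  have h := intervalIntegral.integral_mono_on (g := fun v => v ^ α / (1 - v)) hu₀
    ((intervalIntegrable_inv_one_sub hu).sub (intervalIntegrable_const (c := α)))
    (intervalIntegrable_rpow_div_one_sub (zero_le_one.trans hα) hu) fun v hv => by
      have h1v : 0 < 1 - v := by linarith [hv.2]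
      have hbern : 1 + α * (v - 1) ≤ v ^ α := by
        simpa using one_add_mul_self_le_rpow_one_add (s := v - 1) (by linarith [hv.1]) hα
      rw [le_div_iff₀ h1v, sub_mul, inv_mul_cancel₀ h1v.ne']
      linarith
  rwa [intervalIntegral.integral_sub (intervalIntegrable_inv_one_sub hu) intervalIntegrable_const,
    integral_inv_one_sub hu, intervalIntegral.integral_const, smul_eq_mul, sub_zero,
    mul_comm] at h

end gfun

noncomputable def psiIntegrand (α x u : ℝ) : ℝ := (1 - u)⁻¹ * exp (-x * gfun α u)

section psiIntegrand

variable {α x u : ℝ}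

lemma continuousOn_psiIntegrand (hα : 0 ≤ α) (x : ℝ) :
    ContinuousOn (psiIntegrand α x) (Iio 1) := by
  have hg := continuousOn_gfun hα
  have h1 : ∀ u ∈ Iio (1:ℝ), 1 - u ≠ 0 := fun _ hu => (sub_pos.2 hu).ne'
  unfold psiIntegrand
  fun_prop (disch := assumption)

lemma psiIntegrand_nonneg (hu : u < 1) : 0 ≤ psiIntegrand α x u :=
  mul_nonneg (inv_nonneg.2 (sub_pos.2 hu).le) (exp_pos _).le

lemma one_sub_rpow_le_exp_neg_mul_gfun (hα : 0 ≤ α) (hx : 0 ≤ x) (hu₀ : 0 ≤ u) (hu : u < 1) :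
    (1 - u) ^ x ≤ exp (-x * gfun α u) := by
  rw [rpow_def_of_pos (by linarith), exp_le_exp]
  nlinarith [gfun_le_neg_log hα hu₀ hu]

lemma exp_neg_mul_gfun_le (hα : 1 ≤ α) (hx : 0 ≤ x) (hu₀ : 0 ≤ u) (hu : u < 1) :
    exp (-x * gfun α u) ≤ exp (α * x) * (1 - u) ^ x := by
  rw [rpow_def_of_pos (by linarith), ← exp_add, exp_le_exp]
  nlinarith [neg_log_sub_le_gfun hα hu₀ hu, mul_le_mul_of_nonneg_left hu.le (by linarith : 0 ≤ α)]

lemma one_sub_rpow_sub_one_le_psiIntegrand (hα : 0 ≤ α) (hx : 0 ≤ x) (hu₀ : 0 ≤ u)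
    (hu : u < 1) : (1 - u) ^ (x - 1) ≤ psiIntegrand α x u := by
  rw [rpow_sub_one (by linarith), div_eq_inv_mul]
  exact mul_le_mul_of_nonneg_left (one_sub_rpow_le_exp_neg_mul_gfun hα hx hu₀ hu)
    (inv_nonneg.2 (by linarith))

lemma psiIntegrand_le (hα : 1 ≤ α) (hx : 0 ≤ x) (hu₀ : 0 ≤ u) (hu : u < 1) :
    psiIntegrand α x u ≤ exp (α * x) * (1 - u) ^ (x - 1) := by
  rw [rpow_sub_one (by linarith), mul_div_assoc', div_eq_inv_mul]
  exact mul_le_mul_of_nonneg_left (exp_neg_mul_gfun_le hα hx hu₀ hu)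
    (inv_nonneg.2 (by linarith))

lemma intervalIntegrable_one_sub_rpow (hx : 0 < x) :
    IntervalIntegrable (fun u : ℝ => (1 - u) ^ (x - 1)) volume 0 1 := by
  simpa using ((intervalIntegral.intervalIntegrable_rpow' (a := 0) (b := 1)
    (r := x - 1) (by linarith)).comp_sub_left 1).symm

lemma integral_one_sub_rpow (hx : 0 < x) : ∫ u in (0:ℝ)..1, (1 - u) ^ (x - 1) = x⁻¹ := by
  rw [intervalIntegral.integral_comp_sub_left (fun u => u ^ (x - 1)), sub_self, sub_zero,
    integral_rpow (Or.inl (by linarith)), sub_add_cancel, one_rpow, zero_rpow hx.ne', sub_zero,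
    one_div]

lemma intervalIntegrable_psiIntegrand (hα : 1 ≤ α) (hx : 0 < x) :
    IntervalIntegrable (psiIntegrand α x) volume 0 1 := by
  rw [intervalIntegrable_iff_integrableOn_Ioo_of_le zero_le_one]
  refine Integrable.mono' (((intervalIntegrable_iff_integrableOn_Ioo_of_le zero_le_one).1
    (intervalIntegrable_one_sub_rpow hx)).const_mul (exp (α * x)))
    (((continuousOn_psiIntegrand (by linarith) x).mono fun _ hu => hu.2).aestronglyMeasurable
      measurableSet_Ioo) ((ae_restrict_iff' measurableSet_Ioo).2 (ae_of_all _ fun u hu => ?_))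
  rw [norm_of_nonneg (psiIntegrand_nonneg hu.2)]
  exact psiIntegrand_le hα hx.le hu.1.le hu.2

theorem inv_le_Psi (hα : 1 ≤ α) (hx : 0 < x) : x⁻¹ ≤ Psi α x :=
  integral_one_sub_rpow hx ▸ intervalIntegral.integral_mono_on_of_le_Ioo zero_le_one
    (intervalIntegrable_one_sub_rpow hx) (intervalIntegrable_psiIntegrand hα hx) fun u hu =>
      one_sub_rpow_sub_one_le_psiIntegrand (by linarith) hx.le hu.1.le hu.2

end psiIntegrand

lemma rpow_mul_div_rpow {c t : ℝ} (hc : 0 < c) (ht : 0 ≤ t) (p : ℝ) :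
    c ^ p * (t / c) ^ p = t ^ p := by
  rw [div_rpow ht hc.le, mul_div_cancel₀ _ (rpow_pos_of_pos hc p).ne']

lemma integrableOn_exp_neg_rpow_div {p b : ℝ} (hp : 0 < p) (hb : 0 < b) :
    IntegrableOn (fun t : ℝ => exp (-(t ^ p / b))) (Ioi 0) := by
  simpa [div_eq_inv_mul] using
    integrableOn_rpow_mul_exp_neg_mul_rpow (s := 0) (by norm_num) hp (inv_pos.2 hb)

lemma integral_exp_neg_rpow_div_pos {p b : ℝ} (hp : 0 < p) (hb : 0 < b) :
    0 < ∫ t in Ioi (0:ℝ), exp (-(t ^ p / b)) :=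
  integral_exp_pos (hμ := ⟨by simp⟩) (integrableOn_exp_neg_rpow_div hp hb)

section Laplace

variable {α c t : ℝ}

noncomputable def scaledPsiIntegrand (α c : ℝ) : ℝ → ℝ :=
  (Ioo 0 c).indicator fun t => psiIntegrand α (c ^ (α + 1)) (t / c)

lemma mul_Psi_rpow_eq_integral (hc : 0 < c) :
    c * Psi α (c ^ (α + 1)) = ∫ t in Ioi 0, scaledPsiIntegrand α c t := by
  have h := intervalIntegral.integral_comp_div (psiIntegrand α (c ^ (α + 1))) (a := 0) (b := c)
    hc.ne'
  rw [zero_div, div_self hc.ne', smul_eq_mul] at h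
  change c * ∫ u in (0:ℝ)..1, psiIntegrand α (c ^ (α + 1)) u = _
  rw [← h, intervalIntegral.integral_of_le hc.le, integral_Ioc_eq_integral_Ioo,
    scaledPsiIntegrand, setIntegral_indicator measurableSet_Ioo,
    inter_eq_self_of_subset_right Ioo_subset_Ioi_self]

/-- Splitting `exp (-x g) = exp (-g) exp (-(x - 1) g)`, the first factor cancels `(1 - u)⁻¹`. -/
lemma psiIntegrand_le_exp_mul_exp (hα : 1 ≤ α) {x u : ℝ} (hx : 1 ≤ x) (hu₀ : 0 ≤ u)
    (hu : u < 1) :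
    psiIntegrand α x u ≤ exp α * exp (-((x - 1) * (u ^ (α + 1) / (α + 1)))) := by
  have hsplit : psiIntegrand α x u = psiIntegrand α 1 u * exp (-(x - 1) * gfun α u) := by
    simp only [psiIntegrand, mul_assoc, ← exp_add]
    ring_nf
  have h1 := psiIntegrand_le hα zero_le_one hu₀ hu
  rw [mul_one, sub_self, rpow_zero, mul_one] at h1
  rw [hsplit]
  refine mul_le_mul h1 (exp_le_exp.2 ?_) (exp_pos _).le (exp_pos _).le
  linarith [mul_le_mul_of_nonneg_left (rpow_add_one_div_le_gfun (zero_le_one.trans hα) hu₀ hu)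
    (sub_nonneg.2 hx)]

lemma norm_scaledPsiIntegrand_le (hα : 1 ≤ α) (hc : 0 < c) (hc2 : 2 ≤ c ^ (α + 1)) :
    ‖scaledPsiIntegrand α c t‖ ≤ exp α * exp (-(t ^ (α + 1) / (2 * (α + 1)))) := by
  by_cases ht : t ∈ Ioo 0 c
  · have hu : t / c < 1 := (div_lt_one hc).2 ht.2
    have hu₀ : 0 ≤ t / c := div_nonneg ht.1.le hc.le
    rw [scaledPsiIntegrand, indicator_of_mem ht, norm_of_nonneg (psiIntegrand_nonneg hu)]
    refine (psiIntegrand_le_exp_mul_exp hα (by linarith) hu₀ hu).trans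
      (mul_le_mul_of_nonneg_left (exp_le_exp.2 ?_) (exp_pos _).le)
    have hpow := rpow_mul_div_rpow hc ht.1.le (α + 1)
    have hnn : 0 ≤ (t / c) ^ (α + 1) / (α + 1) := by positivity
    have hhalf :
        t ^ (α + 1) / (2 * (α + 1)) = c ^ (α + 1) * ((t / c) ^ (α + 1) / (α + 1)) / 2 := by
      rw [← hpow]; field_simp
    rw [hhalf, neg_le_neg_iff]
    nlinarith [mul_nonneg (sub_nonneg.2 hc2) hnn]
  · rw [scaledPsiIntegrand, indicator_of_notMem ht, norm_zero]
    positivity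

lemma tendsto_rpow_add_one_mul_gfun_div (hα : 0 ≤ α) (ht : 0 < t) :
    Tendsto (fun c => c ^ (α + 1) * gfun α (t / c)) atTop (𝓝 (t ^ (α + 1) / (α + 1))) := by
  have hdiv : Tendsto (fun c => t / c) atTop (𝓝 0) := tendsto_const_nhds.div_atTop tendsto_id
  have hupper : Tendsto (fun c => t ^ (α + 1) / (α + 1) / (1 - t / c)) atTop
      (𝓝 (t ^ (α + 1) / (α + 1))) := by
    have h := (tendsto_const_nhds (x := t ^ (α + 1) / (α + 1))).div
      (tendsto_const_nhds.sub hdiv) (by norm_num : (1:ℝ) - 0 ≠ 0)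
    rwa [sub_zero, div_one] at h
  have hbounds : ∀ᶠ c in atTop, t ^ (α + 1) / (α + 1) ≤ c ^ (α + 1) * gfun α (t / c) ∧
      c ^ (α + 1) * gfun α (t / c) ≤ t ^ (α + 1) / (α + 1) / (1 - t / c) := by
    filter_upwards [eventually_gt_atTop t] with c htc
    have hc : 0 < c := ht.trans htc
    have hu : t / c < 1 := (div_lt_one hc).2 htc
    have hu₀ : 0 ≤ t / c := div_nonneg ht.le hc.le
    have hcp : 0 ≤ c ^ (α + 1) := (rpow_pos_of_pos hc _).le
    simp only [← rpow_mul_div_rpow hc ht.le (α + 1), mul_div_assoc]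
    exact ⟨mul_le_mul_of_nonneg_left (rpow_add_one_div_le_gfun hα hu₀ hu) hcp,
      mul_le_mul_of_nonneg_left (gfun_le_rpow_add_one_div hα hu₀ hu) hcp⟩
  exact tendsto_of_tendsto_of_tendsto_of_le_of_le' tendsto_const_nhds hupper
    (hbounds.mono fun _ h => h.1) (hbounds.mono fun _ h => h.2)

lemma tendsto_scaledPsiIntegrand (hα : 0 ≤ α) (ht : 0 < t) :
    Tendsto (fun c => scaledPsiIntegrand α c t) atTop (𝓝 (exp (-(t ^ (α + 1) / (α + 1))))) := by
  have hinv : Tendsto (fun c => (1 - t / c)⁻¹) atTop (𝓝 1) := by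
    simpa using (((tendsto_const_nhds (x := t)).div_atTop tendsto_id).const_sub (1:ℝ)).inv₀
      (by norm_num)
  have h := hinv.mul (tendsto_rpow_add_one_mul_gfun_div hα ht).neg.rexp
  rw [one_mul] at h
  refine h.congr' ?_
  filter_upwards [eventually_gt_atTop t] with c htc
  rw [scaledPsiIntegrand, indicator_of_mem (show t ∈ Ioo 0 c from ⟨ht, htc⟩), psiIntegrand, neg_mul]

theorem tendsto_mul_Psi_rpow (hα : 1 ≤ α) :
    Tendsto (fun c => c * Psi α (c ^ (α + 1))) atTop
      (𝓝 (∫ t in Ioi 0, exp (-(t ^ (α + 1) / (α + 1))))) := by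
  have hα₀ : 0 ≤ α := zero_le_one.trans hα
  have hmeas : ∀ᶠ c in atTop,
      AEStronglyMeasurable (scaledPsiIntegrand α c) (volume.restrict (Ioi 0)) := by
    filter_upwards [eventually_gt_atTop 0] with c hc
    refine ((aestronglyMeasurable_indicator_iff measurableSet_Ioo).2
      (ContinuousOn.aestronglyMeasurable ?_ measurableSet_Ioo)).restrict
    exact (continuousOn_psiIntegrand hα₀ _).comp (continuousOn_id.div_const c) fun t ht =>
      (div_lt_one hc).2 ht.2
  have hbound : ∀ᶠ c in atTop, ∀ᵐ t ∂volume.restrict (Ioi 0),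
      ‖scaledPsiIntegrand α c t‖ ≤ exp α * exp (-(t ^ (α + 1) / (2 * (α + 1)))) := by
    filter_upwards [eventually_gt_atTop 0,
      (tendsto_rpow_atTop (by linarith : 0 < α + 1)).eventually_ge_atTop 2] with c hc hc2
    exact ae_of_all _ fun _ => norm_scaledPsiIntegrand_le hα hc hc2
  have hlim : ∀ᵐ t ∂volume.restrict (Ioi 0), Tendsto (fun c => scaledPsiIntegrand α c t) atTop
      (𝓝 (exp (-(t ^ (α + 1) / (α + 1))))) :=
    (ae_restrict_iff' measurableSet_Ioi).2
      (ae_of_all _ fun _ ht => tendsto_scaledPsiIntegrand hα₀ ht)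
  refine (tendsto_integral_filter_of_dominated_convergence _ hmeas hbound
    ((integrableOn_exp_neg_rpow_div (by linarith) (by linarith)).const_mul _) hlim).congr' ?_
  filter_upwards [eventually_gt_atTop 0] with c hc
  exact (mul_Psi_rpow_eq_integral hc).symm

end Laplace

theorem ContinuousOn.exists_isMinOn_Ioi_of_tendsto_atTop {f : ℝ → ℝ} {a : ℝ}
    (hf : ContinuousOn f (Ioi a)) (hleft : Tendsto f (𝓝[>] a) atTop)
    (hright : Tendsto f atTop atTop) : ∃ c ∈ Ioi a, IsMinOn f (Ioi a) c := by
  obtain ⟨b, hab, hb⟩ := mem_nhdsGT_iff_exists_Ioc_subset.1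
    (hleft.eventually_ge_atTop (f (a + 1)))
  obtain ⟨B, hB⟩ := eventually_atTop.1 (hright.eventually_ge_atTop (f (a + 1)))
  set b' := min b (a + 1)
  set B' := max B (a + 1)
  have hb'a : a < b' := lt_min hab (by linarith)
  have hmem : a + 1 ∈ Icc b' B' := ⟨min_le_right _ _, le_max_right _ _⟩
  obtain ⟨c, hc, hmin⟩ := isCompact_Icc.exists_isMinOn ⟨_, hmem⟩
    (hf.mono fun x hx => hb'a.trans_le hx.1)
  refine ⟨c, hb'a.trans_le hc.1, fun x (hx : a < x) => ?_⟩
  rcases le_or_gt x b' with hxb | hxb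
  · exact (hmin hmem).trans (show f (a + 1) ≤ f x from hb ⟨hx, hxb.trans (min_le_left _ _)⟩)
  rcases le_or_gt x B' with hxB | hxB
  · exact hmin ⟨hxb.le, hxB⟩
  · exact (hmin hmem).trans (hB x ((le_max_left _ _).trans hxB.le))

section rootEquation

variable {α : ℝ} {ρ : ℝ → ℝ}

lemma le_mul_rpow_of_mul_Psi_eq_one (hα : 1 ≤ α) {β r : ℝ} (hβ : 0 < β) (hr : 0 < r)
    (h : β * Psi α (r * β ^ α) = 1) : β ≤ r * β ^ α := by
  have hx : 0 < r * β ^ α := mul_pos hr (rpow_pos_of_pos hβ α)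
  have hle := inv_le_Psi hα hx
  rwa [eq_inv_of_mul_eq_one_right h, inv_le_inv₀ hx hβ] at hle

lemma div_rpow_one_div_eq {β r : ℝ} (hα : 0 < α + 1) (hβ : 0 < β) (hr : 0 ≤ r) :
    (r / β) ^ (1 / (α + 1)) = (r * β ^ α) ^ (1 / (α + 1)) / β := by
  have hsplit : r * β ^ α = r / β * β ^ (α + 1) := by
    rw [rpow_add_one hβ.ne']; field_simp
  rw [hsplit, mul_rpow (div_nonneg hr hβ.le) (rpow_nonneg hβ.le _), ← rpow_mul hβ.le,
    mul_one_div_cancel hα.ne', rpow_one, mul_div_cancel_right₀ _ hβ.ne']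

variable (hρ : ∀ β : ℝ, 0 < β → 0 < ρ β ∧ β * Psi α (ρ β * β ^ α) = 1)
include hρ

theorem tendsto_div_rpow_of_mul_Psi_eq_one (hα : 1 ≤ α) :
    Tendsto (fun β => (ρ β / β) ^ (1 / (α + 1))) atTop
      (𝓝 (∫ t in Ioi 0, exp (-(t ^ (α + 1) / (α + 1))))) := by
  have hα₁ : 0 < α + 1 := by linarith
  have hx : Tendsto (fun β => ρ β * β ^ α) atTop atTop :=
    tendsto_atTop_mono' _ ((eventually_gt_atTop 0).mono fun β hβ =>
      le_mul_rpow_of_mul_Psi_eq_one hα hβ (hρ β hβ).1 (hρ β hβ).2) tendsto_id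
  refine ((tendsto_mul_Psi_rpow hα).comp
    ((tendsto_rpow_atTop (one_div_pos.2 hα₁)).comp hx)).congr' ?_
  filter_upwards [eventually_gt_atTop 0] with β hβ
  obtain ⟨hρβ, hβΨ⟩ := hρ β hβ
  rw [Function.comp_apply, Function.comp_apply, one_div, rpow_inv_rpow
    (mul_pos hρβ (rpow_pos_of_pos hβ α)).le hα₁.ne', eq_inv_of_mul_eq_one_right hβΨ,
    ← div_eq_mul_inv, ← one_div, div_rpow_one_div_eq hα₁ hβ hρβ.le]

theorem tendsto_nhdsGT_zero_of_mul_Psi_eq_one (hα : 1 < α) : Tendsto ρ (𝓝[>] 0) atTop := by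
  refine tendsto_atTop_mono' _ (eventually_nhdsWithin_of_forall fun β (hβ : 0 < β) => ?_)
    (tendsto_rpow_neg_nhdsGT_zero (by linarith : 1 - α < 0))
  rw [rpow_sub hβ, rpow_one, div_le_iff₀ (rpow_pos_of_pos hβ α)]
  exact le_mul_rpow_of_mul_Psi_eq_one hα.le hβ (hρ β hβ).1 (hρ β hβ).2

end rootEquation

/-- if, for every `β > 0`, `ρ(β)` is a positive real with
`β Ψ(ρ(β) β^α) = 1`, and `ρ` is continuous on `(0,∞)`, then `ρ(β)/β`
converges, as `β → ∞`, to `(∫₀^∞ exp(-u^{α+1}/(α+1)) du)^{α+1}` (equivalently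
`(ρ(β)/β)^{1/(α+1)}` converges to the integral); in particular `ρ(β) → ∞` as
`β → ∞` and `ρ` attains a positive minimum `ρ_c = ρ(β_c)` at some `β_c > 0`. -/
theorem rho_asymptotics_at_infinity_and_min
    (α : ℝ) (hα : 1 < α) (ρ : ℝ → ℝ)
    (hρ : ∀ β : ℝ, 0 < β → 0 < ρ β ∧ β * Psi α (ρ β * β ^ α) = 1)
    (hρcont : ContinuousOn ρ (Set.Ioi 0)) :
    Tendsto (fun β => ρ β / β) atTop
      (nhds ((∫ u in Set.Ioi (0:ℝ),
        Real.exp (-(u ^ (α + 1) / (α + 1)))) ^ (α + 1))) ∧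
    Tendsto (fun β => (ρ β / β) ^ (1 / (α + 1))) atTop
      (nhds (∫ u in Set.Ioi (0:ℝ), Real.exp (-(u ^ (α + 1) / (α + 1))))) ∧
    Tendsto ρ atTop atTop ∧
    ∃ βc : ℝ, 0 < βc ∧ 0 < ρ βc ∧ ∀ β : ℝ, 0 < β → ρ βc ≤ ρ β := by
  have hα₁ : 0 < α + 1 := by linarith
  have hroot := tendsto_div_rpow_of_mul_Psi_eq_one hρ hα.le
  have hratio : Tendsto (fun β => ρ β / β) atTop
      (𝓝 ((∫ u in Ioi (0:ℝ), exp (-(u ^ (α + 1) / (α + 1)))) ^ (α + 1))) := by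
    refine (hroot.rpow_const (p := α + 1) (Or.inr hα₁.le)).congr' ?_
    filter_upwards [eventually_gt_atTop 0] with β hβ
    rw [← rpow_mul (div_nonneg (hρ β hβ).1.le hβ.le), one_div_mul_cancel hα₁.ne', rpow_one]
  have htop : Tendsto ρ atTop atTop := by
    refine (Tendsto.pos_mul_atTop (rpow_pos_of_pos (integral_exp_neg_rpow_div_pos hα₁ hα₁) _)
      hratio tendsto_id).congr' ?_
    filter_upwards [eventually_gt_atTop 0] with β hβ using div_mul_cancel₀ _ hβ.ne'
  obtain ⟨βc, hβc, hmin⟩ := hρcont.exists_isMinOn_Ioi_of_tendsto_atTop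
    (tendsto_nhdsGT_zero_of_mul_Psi_eq_one hρ hα) htop
  exact ⟨hratio, hroot, htop, βc, hβc, (hρ βc hβc).1, fun β hβ => hmin hβ⟩
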